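/- Let M_1, …, M_{n_w} ∈ ℝ^{n_x × n_z} with n_z = n_x + n_u, W ∈ ℝ^{n_w × n_w} symmetric, E and E* as defined, K ∈ ℝ^{n_u × n_x} a gain with L_K = [I, Kᵀ] and policy map π_K(X) = L_Kᵀ X L_K, and H ∈ ℝ^{n_z × n_z} symmetric. Suppose P ∈ ℝ^{n_x × n_x} is symmetric and satisfies the generalized Lyapunov equation P = L_K (H + E*(P)) L_Kᵀ. Define the Q-function Q(Z) = tr[Z H] + tr[P · E(Z)] for symmetric Z ∈ ℝ^{n_z × n_z}. Then Q is a fixed point of the policy Bellman operator F_π: for every symmetric Z, tr[Z H] + Q(π_K(E(Z))) = Q(Z). -/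

import Mathlib

open Matrix BigOperators

/-- The completely positive operator `E(Z) = Σ_{i,j} W i j • M i * Z * (M j)ᵀ`. -/
def cpE {n_w n_x n_u : ℕ} (W : Matrix (Fin n_w) (Fin n_w) ℝ)
    (M : Fin n_w → Matrix (Fin n_x) (Fin n_x ⊕ Fin n_u) ℝ)
    (Z : Matrix (Fin n_x ⊕ Fin n_u) (Fin n_x ⊕ Fin n_u) ℝ) :
    Matrix (Fin n_x) (Fin n_x) ℝ :=
  ∑ i : Fin n_w, ∑ j : Fin n_w, W i j • (M i * Z * (M j)ᵀ)

/-- Its adjoint `E*(P) = Σ_{i,j} W i j • (M i)ᵀ * P * M j`. -/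
def cpEstar {n_w n_x n_u : ℕ} (W : Matrix (Fin n_w) (Fin n_w) ℝ)
    (M : Fin n_w → Matrix (Fin n_x) (Fin n_x ⊕ Fin n_u) ℝ)
    (P : Matrix (Fin n_x) (Fin n_x) ℝ) :
    Matrix (Fin n_x ⊕ Fin n_u) (Fin n_x ⊕ Fin n_u) ℝ :=
  ∑ i : Fin n_w, ∑ j : Fin n_w, W i j • ((M i)ᵀ * P * M j)

/-- The matrix `L_K = [I, Kᵀ]` associated with a gain `K`. -/
def gainL {n_x n_u : ℕ} (K : Matrix (Fin n_u) (Fin n_x) ℝ) :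
    Matrix (Fin n_x) (Fin n_x ⊕ Fin n_u) ℝ :=
  Matrix.fromCols 1 Kᵀ

/-- The policy map `π_K(X) = L_Kᵀ X L_K`. -/
def policy {n_x n_u : ℕ} (K : Matrix (Fin n_u) (Fin n_x) ℝ)
    (X : Matrix (Fin n_x) (Fin n_x) ℝ) :
    Matrix (Fin n_x ⊕ Fin n_u) (Fin n_x ⊕ Fin n_u) ℝ :=
  (gainL K)ᵀ * X * gainL K

/-!
Write `X = E(Z)`. By cyclicity of the trace, `tr[π_K(X) G] = tr[X L_K G L_Kᵀ]`, and `E*` is the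
trace adjoint of `E` because `W` is symmetric. Hence
`Q(π_K(X)) = tr[π_K(X) (H + E*(P))] = tr[X L_K (H + E*(P)) L_Kᵀ] = tr[X P] = tr[P E(Z)]`
by the Lyapunov equation, which is exactly `Q(Z) - tr[Z H]`.
-/

theorem Matrix.trace_transpose_mul_mul_mul {R m n : Type*} [CommRing R] [Fintype m] [Fintype n]
    (L : Matrix m n R) (X : Matrix m m R) (G : Matrix n n R) :
    (Lᵀ * X * L * G).trace = (X * (L * G * Lᵀ)).trace := by
  rw [Matrix.mul_assoc (Lᵀ * X), trace_mul_comm, ← Matrix.mul_assoc, trace_mul_comm]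

theorem trace_policy_mul {n_x n_u : ℕ} (K : Matrix (Fin n_u) (Fin n_x) ℝ)
    (X : Matrix (Fin n_x) (Fin n_x) ℝ) (G : Matrix (Fin n_x ⊕ Fin n_u) (Fin n_x ⊕ Fin n_u) ℝ) :
    (policy K X * G).trace = (X * (gainL K * G * (gainL K)ᵀ)).trace :=
  trace_transpose_mul_mul_mul _ _ _

theorem trace_mul_cpE {n_w n_x n_u : ℕ} {W : Matrix (Fin n_w) (Fin n_w) ℝ} (hW : W.IsSymm)
    (M : Fin n_w → Matrix (Fin n_x) (Fin n_x ⊕ Fin n_u) ℝ)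
    (P : Matrix (Fin n_x) (Fin n_x) ℝ) (Z : Matrix (Fin n_x ⊕ Fin n_u) (Fin n_x ⊕ Fin n_u) ℝ) :
    (P * cpE W M Z).trace = (cpEstar W M P * Z).trace := by
  simp only [cpE, cpEstar, Matrix.mul_sum, Matrix.sum_mul, trace_sum, Matrix.mul_smul,
    Matrix.smul_mul, trace_smul]
  rw [Finset.sum_comm]
  refine Finset.sum_congr rfl fun i _ => Finset.sum_congr rfl fun j _ => ?_
  rw [hW.apply j i, ← Matrix.mul_assoc, trace_mul_comm, ← Matrix.mul_assoc, ← Matrix.mul_assoc]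

theorem qfunction_fixed_point_general (n_w n_x n_u : ℕ)
    (W : Matrix (Fin n_w) (Fin n_w) ℝ) (hW : W.IsSymm)
    (M : Fin n_w → Matrix (Fin n_x) (Fin n_x ⊕ Fin n_u) ℝ)
    (K : Matrix (Fin n_u) (Fin n_x) ℝ)
    (H : Matrix (Fin n_x ⊕ Fin n_u) (Fin n_x ⊕ Fin n_u) ℝ)
    (P : Matrix (Fin n_x) (Fin n_x) ℝ)
    (hLyap : P = gainL K * (H + cpEstar W M P) * (gainL K)ᵀ)
    (Qfun : Matrix (Fin n_x ⊕ Fin n_u) (Fin n_x ⊕ Fin n_u) ℝ → ℝ)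
    (hQfun : ∀ Z, Qfun Z = (Z * H).trace + (P * cpE W M Z).trace) :
    ∀ Z : Matrix (Fin n_x ⊕ Fin n_u) (Fin n_x ⊕ Fin n_u) ℝ, Z.IsSymm →
      (Z * H).trace + Qfun (policy K (cpE W M Z)) = Qfun Z := by
  intro Z _
  set X := cpE W M Z
  have hQ_policy : Qfun (policy K X) = (P * X).trace :=
    calc Qfun (policy K X)
        = (policy K X * H).trace + (policy K X * cpEstar W M P).trace := by
          rw [hQfun, trace_mul_cpE hW, trace_mul_comm (cpEstar W M P)]
      _ = (X * (gainL K * (H + cpEstar W M P) * (gainL K)ᵀ)).trace := by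
          rw [← trace_add, ← Matrix.mul_add, trace_policy_mul]
      _ = (P * X).trace := by rw [← hLyap, trace_mul_comm]
  rw [hQ_policy, hQfun]

/-- If `P` solves the generalized Lyapunov equation `P = L_K (H + E*(P)) L_Kᵀ`,
then the Q-function `Q(Z) = tr[Z H] + tr[P * E(Z)]` is a fixed point of the
policy Bellman operator: `tr[Z H] + Q(π_K(E(Z))) = Q(Z)` for all symmetric `Z`. -/
theorem qfunction_fixed_point (n_w n_x n_u : ℕ)
    (W : Matrix (Fin n_w) (Fin n_w) ℝ) (hW : W.IsSymm)
    (M : Fin n_w → Matrix (Fin n_x) (Fin n_x ⊕ Fin n_u) ℝ)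
    (K : Matrix (Fin n_u) (Fin n_x) ℝ)
    (H : Matrix (Fin n_x ⊕ Fin n_u) (Fin n_x ⊕ Fin n_u) ℝ) (hH : H.IsSymm)
    (P : Matrix (Fin n_x) (Fin n_x) ℝ) (hP : P.IsSymm)
    (hLyap : P = gainL K * (H + cpEstar W M P) * (gainL K)ᵀ)
    (Qfun : Matrix (Fin n_x ⊕ Fin n_u) (Fin n_x ⊕ Fin n_u) ℝ → ℝ)
    (hQfun : ∀ Z, Qfun Z = (Z * H).trace + (P * cpE W M Z).trace) :
    ∀ Z : Matrix (Fin n_x ⊕ Fin n_u) (Fin n_x ⊕ Fin n_u) ℝ, Z.IsSymm →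
      (Z * H).trace + Qfun (policy K (cpE W M Z)) = Qfun Z :=
  qfunction_fixed_point_general n_w n_x n_u W hW M K H P hLyap Qfun hQfun
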